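/- arXiv:2305.20083 — 3 statements merged into one kernel-verified Lean document; each statement's English description precedes it below -/
import Mathlib

section
/- For every integer n ≥ 1, p·tⁿ = Σ_{m=1}^{n} K(m)·(p·t^{n−m}) + F(n). (This is the generalized discrete-time Mori–Zwanzig operator identity, Lemma 1 of the paper.) -/
/-- Generalized discrete-time Mori–Zwanzig operator identity (Lemma 1):
for an idempotent `p` in a ring, `q = 1 - p`, memory kernels
`K m = p * t * (q * t) ^ (m - 1)` and fluctuation terms
`F n = p * t * (q * t) ^ (n - 1) * q`, one has
`p * t ^ n = ∑_{m=1}^n K m * (p * t ^ (n - m)) + F n` for all `n ≥ 1`. -/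
theorem stmt_0 {R : Type*} [Ring R] (p t : R) (hp : p * p = p)
    (n : ℕ) (hn : 1 ≤ n) :
    p * t ^ n =
      (∑ m ∈ Finset.Icc 1 n,
        (p * t * ((1 - p) * t) ^ (m - 1)) * (p * t ^ (n - m)))
        + p * t * ((1 - p) * t) ^ (n - 1) * (1 - p) := by
  induction n, hn using Nat.le_induction with
  | base => simp; noncomm_ring
  | succ n hn ih =>
    have key : p * t ^ (n + 1) =
        (∑ m ∈ Finset.Icc 1 n,
          (p * t * ((1 - p) * t) ^ (m - 1)) * (p * t ^ (n - m))) * t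
          + p * t * ((1 - p) * t) ^ (n - 1) * (1 - p) * t := by
      rw [pow_succ, ← mul_assoc, ih, add_mul]
    rw [key, Finset.sum_mul]
    rw [Finset.sum_Icc_succ_top (by omega : 1 ≤ n + 1)]
    have hsum : ∀ m ∈ Finset.Icc 1 n,
        (p * t * ((1 - p) * t) ^ (m - 1)) * (p * t ^ (n - m)) * t
          = (p * t * ((1 - p) * t) ^ (m - 1)) * (p * t ^ (n + 1 - m)) := by
      intro m hm
      simp only [Finset.mem_Icc] at hm
      have : n + 1 - m = (n - m) + 1 := by omega
      rw [this, pow_succ]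
      noncomm_ring
    rw [Finset.sum_congr rfl hsum]
    have hpow : ((1 - p) * t) ^ (n - 1) * ((1 - p) * t) = ((1 - p) * t) ^ n := by
      rw [← pow_succ]; congr 1; omega
    have htail : p * t * ((1 - p) * t) ^ (n - 1) * (1 - p) * t
        = (p * t * ((1 - p) * t) ^ (n + 1 - 1)) * (p * t ^ (n + 1 - (n + 1)))
          + p * t * ((1 - p) * t) ^ (n + 1 - 1) * (1 - p) := by
      have h1 : p * t * ((1 - p) * t) ^ (n - 1) * (1 - p) * t
          = p * t * ((1 - p) * t) ^ n := by
        rw [← hpow]; noncomm_ring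
      rw [h1]
      simp only [Nat.add_sub_cancel, Nat.sub_self, pow_zero, mul_one]
      noncomm_ring
    rw [add_assoc, htail]
end

section
/- If x ∈ R satisfies p·x = x, then for every integer n ≥ 1, p·tⁿ·x = Σ_{m=1}^{n} K(m)·(p·t^{n−m}·x); that is, for P-invariant observables the fluctuation terms drop out of the Mori–Zwanzig identity. -/
private lemma mz_aux {R : Type*} [Ring R] (p t x : R) (hx : p * x = x) :
    ∀ k : ℕ, t ^ k * x =
      ∑ m ∈ Finset.range (k + 1), ((1 - p) * t) ^ m * (p * t ^ (k - m) * x) := by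
  intro k
  induction k with
  | zero => simp [hx]
  | succ k ih =>
    rw [Finset.sum_range_succ']
    have h0 : ((1 - p) * t) ^ 0 * (p * t ^ (k + 1 - 0) * x) = p * (t ^ (k + 1) * x) := by
      simp [mul_assoc]
    have h1 : ∀ i ∈ Finset.range (k + 1),
        ((1 - p) * t) ^ (i + 1) * (p * t ^ (k + 1 - (i + 1)) * x)
          = (1 - p) * t * (((1 - p) * t) ^ i * (p * t ^ (k - i) * x)) := by
      intro i _
      have h2 : k + 1 - (i + 1) = k - i := by omega
      rw [h2, pow_succ']
      noncomm_ring
    rw [h0, Finset.sum_congr rfl h1, ← Finset.mul_sum, ← ih]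
    have h3 : (1 - p) * t * (t ^ k * x) = (1 - p) * (t ^ (k + 1) * x) := by
      rw [pow_succ']; noncomm_ring
    rw [h3]; noncomm_ring

/-- If `p * x = x` (a `P`-invariant observable), then the fluctuation terms
drop out of the Mori–Zwanzig identity:
`p * t ^ n * x = ∑_{m=1}^n K m * (p * t ^ (n - m) * x)` for all `n ≥ 1`,
where `K m = p * t * ((1 - p) * t) ^ (m - 1)`. -/
theorem stmt_2 {R : Type*} [Ring R] (p t x : R) (hp : p * p = p)
    (hx : p * x = x) (n : ℕ) (hn : 1 ≤ n) :
    p * t ^ n * x =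
      ∑ m ∈ Finset.Icc 1 n,
        (p * t * ((1 - p) * t) ^ (m - 1)) * (p * t ^ (n - m) * x) := by
  obtain ⟨k, rfl⟩ := Nat.exists_eq_add_of_le hn
  rw [← Finset.Ico_add_one_right_eq_Icc, Finset.sum_Ico_eq_sum_range]
  have hstep : ∀ i ∈ Finset.range (1 + k + 1 - 1),
      (p * t * ((1 - p) * t) ^ (1 + i - 1)) * (p * t ^ (1 + k - (1 + i)) * x)
        = p * t * (((1 - p) * t) ^ i * (p * t ^ (k - i) * x)) := by
    intro i _
    have h1 : 1 + k - (1 + i) = k - i := by omega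
    have h2 : 1 + i - 1 = i := by omega
    rw [h1, h2, mul_assoc]
  rw [Finset.sum_congr rfl hstep, ← Finset.mul_sum]
  have hk : 1 + k + 1 - 1 = k + 1 := by omega
  rw [hk, ← mz_aux p t x hx k]
  have h3 : 1 + k = k + 1 := by omega
  rw [h3, pow_succ']; noncomm_ring
end

section
/- With P, Q = Id − P, T, χ_J, 𝒯 and 𝒦 as in the context: (i) for every n ≥ 1 and each macrostate I, the function P T (Q T)^{n−1} χ_J is constant on the set of augmented states whose macrostate coordinate is I, so that 𝒦_{IJ}(n) is well defined; and (ii) the matrix Mori–Zwanzig equation 𝒯(n) = Σ_{m=1}^{n} 𝒦(m)·𝒯(n−m) holds for every n ≥ 1, where the product is matrix multiplication over the finite macrostate index set. (Theorem 2 of the paper.) -/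
open MeasureTheory ProbabilityTheory Finset

noncomputable section

/-!
The Mori–Zwanzig equation is the compression of an operator identity. Inserting `1 = P + Q` after
every factor `T` and stopping at the first `P` gives the Dyson expansion
`T^(n+1) = ∑_{i+j=n} T (QT)^i P T^j + T (QT)^n Q`, valid in any ring. The projection is
`P = ∑_L χ_L ⊗ e_L`, where `e_L` averages over `η_L` at clock `τ L`. Since `e_I χ_J = δ_IJ`,
we have `Q χ_J = 0`, which kills the remainder, and the matrix `e_I (X χ_J)` of `X P Y` is the
product of those of `X` and `Y`. Reading off the matrices of `T^(n+1)`, `T (QT)^i` and `T^j` gives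
`𝒯(n+1) = ∑_{i+j=n} 𝒦(i+1) 𝒯(j)`.

Since `T` and `P` are additive only on integrable functions, the identity is applied in the space
of bounded measurable functions, on which `κ` acts as a linear endomorphism.
-/

theorem pow_succ_eq_sum_antidiagonal_add {R : Type*} [Ring R] {p q : R} (hpq : p + q = 1)
    (a : R) (n : ℕ) :
    a ^ (n + 1) = ∑ ij ∈ antidiagonal n, a * (q * a) ^ ij.1 * p * a ^ ij.2
      + a * (q * a) ^ n * q := by
  induction n with
  | zero => simp [← mul_add, hpq]
  | succ n ih =>
    have split :
        a * (q * a) ^ (n + 1) = a * (q * a) ^ (n + 1) * p + a * (q * a) ^ (n + 1) * q := by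
      rw [← mul_add, hpq, mul_one]
    rw [pow_succ, ih, add_mul, Nat.sum_antidiagonal_succ', sum_mul]
    simp only [pow_zero, mul_one, pow_succ, mul_assoc] at split ⊢
    rw [split]
    abel

section Pairing

variable {R V ι : Type*} [CommRing R] [AddCommGroup V] [Module R V]
  (e : ι → Module.Dual R V) (χ : ι → V)

def pairingMatrix : Module.End R V →+ Matrix ι ι R where
  toFun X := Matrix.of fun I J => e I (X (χ J))
  map_zero' := by ext; simp
  map_add' X Y := by ext; simp

lemma pairingMatrix_apply (X : Module.End R V) (I J : ι) :
    pairingMatrix e χ X I J = e I (X (χ J)) := rfl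

variable [Fintype ι]

def pairingProj : Module.End R V :=
  ∑ L, (e L).smulRight (χ L)

lemma pairingProj_apply (v : V) : pairingProj e χ v = ∑ L, e L v • χ L := by
  simp [pairingProj]

lemma pairingMatrix_mul_pairingProj_mul (X Y : Module.End R V) :
    pairingMatrix e χ (X * pairingProj e χ * Y) =
      pairingMatrix e χ X * pairingMatrix e χ Y := by
  ext I J
  simp [pairingMatrix_apply, pairingProj_apply, Matrix.mul_apply, mul_comm]

variable [DecidableEq ι] {e χ}

lemma pairingProj_apply_self (he : ∀ I J, e I (χ J) = if I = J then 1 else 0) (J : ι) :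
    pairingProj e χ (χ J) = χ J := by
  simp [pairingProj_apply, he]

theorem pairingMatrix_pow_succ (he : ∀ I J, e I (χ J) = if I = J then 1 else 0)
    (a : Module.End R V) (n : ℕ) :
    pairingMatrix e χ (a ^ (n + 1)) = ∑ ij ∈ antidiagonal n,
      pairingMatrix e χ (a * ((1 - pairingProj e χ) * a) ^ ij.1) *
        pairingMatrix e χ (a ^ ij.2) := by
  have hrem :
      pairingMatrix e χ (a * ((1 - pairingProj e χ) * a) ^ n * (1 - pairingProj e χ)) = 0 := by
    ext I J
    simp [pairingMatrix_apply, pairingProj_apply_self he]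
  rw [pow_succ_eq_sum_antidiagonal_add (add_sub_cancel (pairingProj e χ) 1), map_add, map_sum,
    hrem, add_zero]
  simp only [pairingMatrix_mul_pairingProj_mul]

end Pairing

section BoundedMeasurable

variable {Ω : Type*} [MeasurableSpace Ω]

variable (Ω) in
def boundedMeasurable : Submodule ℝ (Ω → ℝ) where
  carrier := {f | Measurable f ∧ ∃ C, ∀ x, ‖f x‖ ≤ C}
  zero_mem' := ⟨measurable_const, 0, by simp⟩
  add_mem' := by
    rintro f g ⟨hf, C, hC⟩ ⟨hg, D, hD⟩
    exact ⟨hf.add hg, C + D, fun x => (norm_add_le _ _).trans (add_le_add (hC x) (hD x))⟩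
  smul_mem' := by
    rintro c f ⟨hf, C, hC⟩
    refine ⟨hf.const_smul c, ‖c‖ * C, fun x => ?_⟩
    simpa [norm_smul] using mul_le_mul_of_nonneg_left (hC x) (norm_nonneg c)

namespace boundedMeasurable

lemma integrable {f : Ω → ℝ} (hf : f ∈ boundedMeasurable Ω) (μ : Measure Ω)
    [IsFiniteMeasure μ] : Integrable f μ := by
  obtain ⟨hm, C, hC⟩ := hf
  exact (integrable_const C).mono' hm.aestronglyMeasurable (ae_of_all _ hC)

def integral (μ : Measure Ω) [IsFiniteMeasure μ] : Module.Dual ℝ (boundedMeasurable Ω) where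
  toFun f := ∫ x, (f : Ω → ℝ) x ∂μ
  map_add' f g := integral_add (integrable f.2 μ) (integrable g.2 μ)
  map_smul' c _ := integral_const_mul c _

lemma integral_apply (μ : Measure Ω) [IsFiniteMeasure μ] (f : boundedMeasurable Ω) :
    integral μ f = ∫ x, (f : Ω → ℝ) x ∂μ := rfl

end boundedMeasurable

lemma ProbabilityTheory.Kernel.integral_mem_boundedMeasurable {α : Type*} [MeasurableSpace α]
    (κ : Kernel α Ω) [IsFiniteKernel κ] {f : Ω → ℝ} (hf : f ∈ boundedMeasurable Ω) :
    (fun z => ∫ y, f y ∂κ z) ∈ boundedMeasurable α := by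
  obtain ⟨hm, C, hC⟩ := hf
  refine ⟨hm.stronglyMeasurable.integral_kernel.measurable, |C| * κ.bound.toReal, fun z => ?_⟩
  calc ‖∫ y, f y ∂κ z‖ ≤ |C| * (κ z).real Set.univ :=
        norm_integral_le_of_norm_le_const (ae_of_all _ fun y => (hC y).trans (le_abs_self C))
    _ ≤ |C| * κ.bound.toReal := by
        gcongr
        exact ENNReal.toReal_mono κ.bound_ne_top (κ.measure_le_bound z _)

def ProbabilityTheory.Kernel.boundedAction (κ : Kernel Ω Ω) [IsFiniteKernel κ] :
    Module.End ℝ (boundedMeasurable Ω) where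
  toFun f := ⟨fun z => ∫ y, (f : Ω → ℝ) y ∂κ z, κ.integral_mem_boundedMeasurable f.2⟩
  map_add' f g := by
    ext z
    exact integral_add (boundedMeasurable.integrable f.2 (κ z))
      (boundedMeasurable.integrable g.2 (κ z))
  map_smul' c _ := by
    ext z
    exact integral_const_mul c _

lemma ProbabilityTheory.Kernel.boundedAction_apply (κ : Kernel Ω Ω) [IsFiniteKernel κ]
    (f : boundedMeasurable Ω) (z : Ω) :
    (κ.boundedAction f : Ω → ℝ) z = ∫ y, (f : Ω → ℝ) y ∂κ z := rfl

end BoundedMeasurable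

lemma Submodule.coe_pow_apply_eq_iterate {R M : Type*} [Semiring R] [AddCommMonoid M]
    [Module R M] {S : Submodule R M} {A : Module.End R S} {F : M → M}
    (h : ∀ x : S, (A x : M) = F x) (n : ℕ) (x : S) : ((A ^ n) x : M) = F^[n] x := by
  rw [Module.End.pow_apply]
  exact Function.Semiconj.iterate_right (f := Subtype.val) h n x

section Macrostates

variable {E ι : Type*} [MeasurableSpace E] [MeasurableSpace ι] (τ : ι → ℕ) (η : ι → Measure E)

def macroAverage [∀ I, IsFiniteMeasure (η I)] (I : ι) :
    Module.Dual ℝ (boundedMeasurable (E × ι × ℕ)) :=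
  boundedMeasurable.integral ((η I).map fun z => (z, I, τ I))

lemma macroAverage_apply [∀ I, IsFiniteMeasure (η I)] (I : ι)
    (f : boundedMeasurable (E × ι × ℕ)) :
    macroAverage τ η I f = ∫ z, (f : E × ι × ℕ → ℝ) (z, I, τ I) ∂η I :=
  (boundedMeasurable.integral_apply _ f).trans <|
    integral_map (measurable_id.prodMk measurable_const).aemeasurable f.2.1.aestronglyMeasurable

variable [MeasurableSingletonClass ι] [DecidableEq ι]

variable (E) in
def macroIndicator (J : ι) : boundedMeasurable (E × ι × ℕ) :=
  ⟨fun z => if z.2.1 = J then 1 else 0,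
    Measurable.ite (measurable_fst.comp measurable_snd (measurableSet_singleton J))
      measurable_const measurable_const,
    1, fun z => by dsimp only; split_ifs <;> simp⟩

lemma macroAverage_macroIndicator [∀ I, IsProbabilityMeasure (η I)] (I J : ι) :
    macroAverage τ η I (macroIndicator E J) = if I = J then 1 else 0 := by
  by_cases h : I = J <;> simp [macroAverage_apply, macroIndicator, h]

lemma pairingProj_macroAverage_apply [Fintype ι] [∀ I, IsFiniteMeasure (η I)]
    (f : boundedMeasurable (E × ι × ℕ)) (x : E) (I : ι) (s : ℕ) :
    (pairingProj (macroAverage τ η) (macroIndicator E) f : E × ι × ℕ → ℝ) (x, I, s)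
      = ∫ z, (f : E × ι × ℕ → ℝ) (z, I, τ I) ∂η I := by
  simp [pairingProj_apply, macroAverage_apply, macroIndicator]

end Macrostates

theorem stmt_14_general
    {E : Type*} [MeasurableSpace E]
    {ι : Type*} [Fintype ι] [DecidableEq ι]
    [MeasurableSpace ι] [MeasurableSingletonClass ι]
    (τ : ι → ℕ) (η : ι → Measure E) (hη : ∀ I, IsProbabilityMeasure (η I))
    (κ : Kernel (E × ι × ℕ) (E × ι × ℕ)) [IsMarkovKernel κ]
    (T : ((E × ι × ℕ) → ℝ) → ((E × ι × ℕ) → ℝ))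
    (hT : ∀ f z, T f z = ∫ y, f y ∂(κ z))
    (P : ((E × ι × ℕ) → ℝ) → ((E × ι × ℕ) → ℝ))
    (hP : ∀ f (x : E) (I : ι) (s : ℕ), P f (x, I, s) = ∫ z, f (z, I, τ I) ∂(η I))
    (Q : ((E × ι × ℕ) → ℝ) → ((E × ι × ℕ) → ℝ))
    (hQ : ∀ f, Q f = f - P f)
    (χ : ι → (E × ι × ℕ) → ℝ)
    (hχ : ∀ (J : ι) (x : E) (I : ι) (s : ℕ), χ J (x, I, s) = if I = J then 1 else 0)
    (𝒯 : ℕ → Matrix ι ι ℝ)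
    (h𝒯 : ∀ n (I J : ι), 𝒯 n I J = ∫ z, (T^[n] (χ J)) (z, I, τ I) ∂(η I))
    (𝒦 : ℕ → Matrix ι ι ℝ)
    (h𝒦 : ∀ n, 1 ≤ n → ∀ (I J : ι),
      𝒦 n I J = ∫ z, (T (((Q ∘ T)^[n - 1]) (χ J))) (z, I, τ I) ∂(η I)) :
    (∀ n, 1 ≤ n → ∀ (I J : ι) (x : E) (s : ℕ),
        (P (T (((Q ∘ T)^[n - 1]) (χ J)))) (x, I, s) = 𝒦 n I J) ∧
    (∀ n, 1 ≤ n → 𝒯 n = ∑ m ∈ Finset.Icc 1 n, 𝒦 m * 𝒯 (n - m)) := by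
  refine ⟨fun n hn I J x s => by rw [hP, h𝒦 n hn], fun n hn => ?_⟩
  set e := macroAverage τ η
  set p := pairingProj e (macroIndicator E)
  set a := κ.boundedAction
  have hχ' : ∀ J, χ J = macroIndicator E J := fun J => funext fun ⟨x, I, s⟩ => hχ J x I s
  have ha : ∀ f, (a f : E × ι × ℕ → ℝ) = T f := fun f => funext fun z => by
    rw [Kernel.boundedAction_apply, hT]
  have hqa : ∀ f, (((1 - p) * a) f : E × ι × ℕ → ℝ) = (Q ∘ T) f := fun f => by
    ext ⟨x, I, s⟩
    simp [p, e, hQ, hP, pairingProj_macroAverage_apply, ha]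
  have h𝒯_matrix : ∀ n, 𝒯 n = pairingMatrix e (macroIndicator E) (a ^ n) := fun n => by
    ext I J
    rw [h𝒯, pairingMatrix_apply, macroAverage_apply, Submodule.coe_pow_apply_eq_iterate ha,
      hχ']
  have h𝒦_matrix : ∀ n, 𝒦 (n + 1) = pairingMatrix e (macroIndicator E) (a * ((1 - p) * a) ^ n) :=
    fun n => by
    ext I J
    rw [h𝒦 _ (Nat.le_add_left 1 n), pairingMatrix_apply, macroAverage_apply,
      Module.End.mul_apply, ha, Submodule.coe_pow_apply_eq_iterate hqa, hχ', Nat.add_sub_cancel]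
  obtain ⟨n, rfl⟩ := Nat.exists_eq_add_of_le' hn
  rw [h𝒯_matrix, pairingMatrix_pow_succ (macroAverage_macroIndicator τ η),
    Nat.sum_antidiagonal_eq_sum_range_succ_mk, ← Ico_add_one_right_eq_Icc,
    sum_Ico_eq_sum_range]
  refine sum_congr (by simp) fun k _ => ?_
  rw [add_comm 1 k, Nat.add_sub_add_right, h𝒦_matrix, h𝒯_matrix]

/-- Theorem 2 of the paper. Let `κ` be a Markov kernel on the augmented space
`E × ι × ℕ` (microstate, macrostate, clock), acting on observables by
`T f z = ∫ f dκ(z)`; let `P` be the projection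
`P f (x, I, s) = ∫ f (z, I, τ I) dη_I(z)` and `Q = Id − P`; let
`χ J` be the macrostate indicator; let
`𝒯 n I J = ∫ (Tⁿ (χ J)) (z, I, τ I) dη_I(z)` be the transition matrices and
`𝒦 n I J` the memory kernels. Then (i) for each `n ≥ 1`, the function
`P T (Q T)^{n−1} (χ J)` is constant on augmented states with macrostate
coordinate `I`, equal to `𝒦 n I J` (so `𝒦` is well defined); and (ii) the
matrix Mori–Zwanzig equation `𝒯 n = ∑_{m=1}^{n} 𝒦 m * 𝒯 (n − m)` holds for
every `n ≥ 1`. -/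
theorem stmt_14
    {E : Type*} [MeasurableSpace E]
    {ι : Type*} [Fintype ι] [Nonempty ι] [DecidableEq ι]
    [MeasurableSpace ι] [MeasurableSingletonClass ι]
    (τ : ι → ℕ) (η : ι → Measure E) (hη : ∀ I, IsProbabilityMeasure (η I))
    (κ : Kernel (E × ι × ℕ) (E × ι × ℕ)) [IsMarkovKernel κ]
    (T : ((E × ι × ℕ) → ℝ) → ((E × ι × ℕ) → ℝ))
    (hT : ∀ f z, T f z = ∫ y, f y ∂(κ z))
    (P : ((E × ι × ℕ) → ℝ) → ((E × ι × ℕ) → ℝ))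
    (hP : ∀ f (x : E) (I : ι) (s : ℕ), P f (x, I, s) = ∫ z, f (z, I, τ I) ∂(η I))
    (Q : ((E × ι × ℕ) → ℝ) → ((E × ι × ℕ) → ℝ))
    (hQ : ∀ f, Q f = f - P f)
    (χ : ι → (E × ι × ℕ) → ℝ)
    (hχ : ∀ (J : ι) (x : E) (I : ι) (s : ℕ), χ J (x, I, s) = if I = J then 1 else 0)
    (𝒯 : ℕ → Matrix ι ι ℝ)
    (h𝒯 : ∀ n (I J : ι), 𝒯 n I J = ∫ z, (T^[n] (χ J)) (z, I, τ I) ∂(η I))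
    (𝒦 : ℕ → Matrix ι ι ℝ)
    (h𝒦 : ∀ n, 1 ≤ n → ∀ (I J : ι),
      𝒦 n I J = ∫ z, (T (((Q ∘ T)^[n - 1]) (χ J))) (z, I, τ I) ∂(η I)) :
    (∀ n, 1 ≤ n → ∀ (I J : ι) (x : E) (s : ℕ),
        (P (T (((Q ∘ T)^[n - 1]) (χ J)))) (x, I, s) = 𝒦 n I J) ∧
    (∀ n, 1 ≤ n → 𝒯 n = ∑ m ∈ Finset.Icc 1 n, 𝒦 m * 𝒯 (n - m)) :=
  stmt_14_general τ η hη κ T hT P hP Q hQ χ hχ 𝒯 h𝒯 𝒦 h𝒦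
end
end
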